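/- arXiv:1802.09221 — 6 statements merged into one kernel-verified Lean document; each statement's English description precedes it below -/
import Mathlib

section
/- Under the mixture model, for any two observation indices l ≠ n (1 ≤ l, n ≤ L), the expected normalized correlation of the observations satisfies E[(1/D) Σ_{k=1}^D a_l(k) a_n(k)] = Σ_{j=1}^J p_j(l) p_j(n). -/
open MeasureTheory ProbabilityTheory

/-!
For each coordinate `k`, expand `a_l(k) a_n(k) = ∑_{i,j} (I_i(l,k) I_j(n,k)) (h_i(k) h_j(k))`.
Independence of indicators and sources factors the expectation of each term as
`E[I_i(l,k) I_j(n,k)] E[h_i(k) h_j(k)]`; since `l ≠ n` the two indicators are independent, so the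
first factor is `p_i(l) p_j(n)`, and orthonormality of the sources keeps only the terms `i = j`.
Every coordinate then contributes `∑_j p_j(l) p_j(n)`, and the factor `1/D` averages them.
-/

section Mixture

variable {Ω ι : Type*} [Fintype ι] {X X' Y : ι → Ω → ℝ}

lemma sum_mul_mul_sum_mul_eq (ω : Ω) :
    (∑ i, X i ω * Y i ω) * (∑ j, X' j ω * Y j ω) =
      ∑ i, ∑ j, (X i * X' j) ω * (Y i * Y j) ω := by
  rw [Finset.sum_mul_sum]
  refine Finset.sum_congr rfl fun i _ => Finset.sum_congr rfl fun j _ => ?_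
  simp only [Pi.mul_apply]
  ring

variable [MeasurableSpace Ω] {μ : Measure Ω}

lemma integrable_mul_mul_of_indepFun {A B U V : Ω → ℝ} (hA : Integrable A μ)
    (hB : Integrable B μ) (hU : MemLp U 2 μ) (hV : MemLp V 2 μ) (hAB : IndepFun A B μ)
    (hABUV : IndepFun (A * B) (U * V) μ) :
    Integrable (fun ω => (A * B) ω * (U * V) ω) μ :=
  hABUV.integrable_mul (hAB.integrable_mul hA hB) (hU.integrable_mul hV)

lemma integrable_sum_mul_mul_sum_mul
    (hX : ∀ i, Integrable (X i) μ) (hX' : ∀ j, Integrable (X' j) μ)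
    (hY : ∀ i, MemLp (Y i) 2 μ)
    (hXX' : ∀ i j, IndepFun (X i) (X' j) μ)
    (hXY : ∀ i j, IndepFun (X i * X' j) (Y i * Y j) μ) :
    Integrable (fun ω => (∑ i, X i ω * Y i ω) * (∑ j, X' j ω * Y j ω)) μ := by
  simp_rw [sum_mul_mul_sum_mul_eq]
  exact integrable_finsetSum _ fun i _ => integrable_finsetSum _ fun j _ =>
    integrable_mul_mul_of_indepFun (hX i) (hX' j) (hY i) (hY j) (hXX' i j) (hXY i j)

lemma integral_sum_mul_mul_sum_mul_of_orthonormal [DecidableEq ι]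
    (hX : ∀ i, Integrable (X i) μ) (hX' : ∀ j, Integrable (X' j) μ)
    (hY : ∀ i, MemLp (Y i) 2 μ)
    (hXX' : ∀ i j, IndepFun (X i) (X' j) μ)
    (hXY : ∀ i j, IndepFun (X i * X' j) (Y i * Y j) μ)
    (hYY : ∀ i j, ∫ ω, Y i ω * Y j ω ∂μ = if i = j then 1 else 0) :
    ∫ ω, (∑ i, X i ω * Y i ω) * (∑ j, X' j ω * Y j ω) ∂μ =
      ∑ i, (∫ ω, X i ω ∂μ) * ∫ ω, X' i ω ∂μ := by
  have hterm : ∀ i j, ∫ ω, (X i * X' j) ω * (Y i * Y j) ω ∂μ =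
      if i = j then (∫ ω, X i ω ∂μ) * ∫ ω, X' j ω ∂μ else 0 := by
    intro i j
    rw [(hXY i j).integral_fun_mul_eq_mul_integral
        ((hX i).aestronglyMeasurable.mul (hX' j).aestronglyMeasurable)
        ((hY i).aestronglyMeasurable.mul (hY j).aestronglyMeasurable),
      (hXX' i j).integral_mul_eq_mul_integral (hX i).aestronglyMeasurable
        (hX' j).aestronglyMeasurable]
    simp only [Pi.mul_apply, hYY, mul_ite, mul_one, mul_zero]
  have hint : ∀ i j, Integrable (fun ω => (X i * X' j) ω * (Y i * Y j) ω) μ := fun i j =>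
    integrable_mul_mul_of_indepFun (hX i) (hX' j) (hY i) (hY j) (hXX' i j) (hXY i j)
  simp_rw [sum_mul_mul_sum_mul_eq]
  rw [integral_finsetSum _ fun i _ => integrable_finsetSum _ fun j _ => hint i j]
  simp_rw [integral_finsetSum _ fun j _ => hint _ j, hterm, Finset.sum_ite_eq,
    Finset.mem_univ, if_true]

end Mixture

theorem expected_correlation_offdiag_general
    {Ω : Type*} [MeasurableSpace Ω] (μ : Measure Ω) [IsProbabilityMeasure μ]
    (J L D : ℕ) (hD : 0 < D)
    -- hidden sources
    (h : Fin J → Fin D → Ω → ℝ)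
    (hmeas : ∀ j k, Measurable (h j k))
    -- all moments of the sources are finite
    (hmom : ∀ j k (n : ℕ), Integrable (fun ω => |h j k ω| ^ n) μ)
    -- second-moment structure: E[h_i(k) h_j(k')] = δ_{ij} δ_{kk'}
    (hcorr : ∀ (i j : Fin J) (k k' : Fin D),
      ∫ ω, h i k ω * h j k' ω ∂μ = if i = j ∧ k = k' then 1 else 0)
    -- indicators
    (I : Fin J → Fin L → Fin D → Ω → ℝ)
    (hImeas : ∀ j l k, Measurable (I j l k))
    (hI01 : ∀ j l k ω, I j l k ω = 0 ∨ I j l k ω = 1)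
    -- probabilities
    (p : Fin J → Fin L → ℝ)
    (hEI : ∀ j l k, ∫ ω, I j l k ω ∂μ = p j l)
    -- the indicator families associated with distinct pairs (l,k) are mutually independent
    (hIndepI : iIndepFun
      (fun (lk : Fin L × Fin D) ω => fun j => I j lk.1 lk.2 ω) μ)
    -- the collection of all indicators is independent of the collection of all sources
    (hIndepIh : IndepFun
      (fun ω => fun jlk : Fin J × Fin L × Fin D => I jlk.1 jlk.2.1 jlk.2.2 ω)
      (fun ω => fun jk : Fin J × Fin D => h jk.1 jk.2 ω) μ)
    -- observations
    (a : Fin L → Fin D → Ω → ℝ)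
    (ha : ∀ l k ω, a l k ω = ∑ j, I j l k ω * h j k ω) :
    ∀ l n : Fin L, l ≠ n →
      ∫ ω, (1 / (D : ℝ)) * ∑ k, a l k ω * a n k ω ∂μ = ∑ j, p j l * p j n := by
  intro l n hln
  have hI : ∀ j l k, Integrable (I j l k) μ := fun j l k =>
    .of_bound (hImeas j l k).aestronglyMeasurable 1 (ae_of_all _ fun ω => by
      rcases hI01 j l k ω with hω | hω <;> simp [hω])
  have hL2 : ∀ j k, MemLp (h j k) 2 μ := fun j k =>
    (memLp_two_iff_integrable_sq (hmeas j k).aestronglyMeasurable).2 (by simpa using hmom j k 2)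
  have hsel : ∀ k i j, IndepFun (I i l k) (I j n k) μ := fun k i j =>
    (hIndepI.indepFun (i := (l, k)) (j := (n, k)) (by simp [hln])).comp
      (measurable_pi_apply i) (measurable_pi_apply j)
  have hsrc : ∀ k i j, IndepFun (I i l k * I j n k) (h i k * h j k) μ := fun k i j =>
    hIndepIh.comp ((measurable_pi_apply (i, l, k)).mul (measurable_pi_apply (j, n, k)))
      ((measurable_pi_apply (i, k)).mul (measurable_pi_apply (j, k)))
  have horth : ∀ k i j, ∫ ω, h i k ω * h j k ω ∂μ = if i = j then 1 else 0 := by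
    simp [hcorr]
  have hcoord : ∀ k, ∫ ω, a l k ω * a n k ω ∂μ = ∑ j, p j l * p j n := fun k => by
    simp_rw [ha]
    rw [integral_sum_mul_mul_sum_mul_of_orthonormal (hI · l k) (hI · n k) (hL2 · k) (hsel k)
      (hsrc k) (horth k)]
    simp_rw [hEI]
  have hint : ∀ k, Integrable (fun ω => a l k ω * a n k ω) μ := fun k => by
    simp_rw [ha]
    exact integrable_sum_mul_mul_sum_mul (hI · l k) (hI · n k) (hL2 · k) (hsel k) (hsrc k)
  rw [integral_const_mul, integral_finsetSum _ fun k _ => hint k]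
  simp [hcoord, hD.ne']

/-- Under the mixture model, for any two observation indices `l ≠ n`,
the expected normalized correlation of the observations satisfies
`E[(1/D) ∑ₖ a_l(k) a_n(k)] = ∑ⱼ p_j(l) p_j(n)`. -/
theorem expected_correlation_offdiag
    {Ω : Type*} [MeasurableSpace Ω] (μ : Measure Ω) [IsProbabilityMeasure μ]
    (J L D : ℕ) (hJ : 0 < J) (hL : 0 < L) (hD : 0 < D)
    -- hidden sources
    (h : Fin J → Fin D → Ω → ℝ)
    (hmeas : ∀ j k, Measurable (h j k))
    -- all moments of the sources are finite
    (hmom : ∀ j k (n : ℕ), Integrable (fun ω => |h j k ω| ^ n) μ)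
    -- second-moment structure: E[h_i(k) h_j(k')] = δ_{ij} δ_{kk'}
    (hcorr : ∀ (i j : Fin J) (k k' : Fin D),
      ∫ ω, h i k ω * h j k' ω ∂μ = if i = j ∧ k = k' then 1 else 0)
    -- indicators
    (I : Fin J → Fin L → Fin D → Ω → ℝ)
    (hImeas : ∀ j l k, Measurable (I j l k))
    (hI01 : ∀ j l k ω, I j l k ω = 0 ∨ I j l k ω = 1)
    (hIsum : ∀ l k ω, ∑ j, I j l k ω = 1)
    -- probabilities
    (p : Fin J → Fin L → ℝ)
    (hp0 : ∀ j l, 0 ≤ p j l) (hp1 : ∀ l, ∑ j, p j l = 1)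
    (hEI : ∀ j l k, ∫ ω, I j l k ω ∂μ = p j l)
    -- the indicator families associated with distinct pairs (l,k) are mutually independent
    (hIndepI : iIndepFun
      (fun (lk : Fin L × Fin D) ω => fun j => I j lk.1 lk.2 ω) μ)
    -- the collection of all indicators is independent of the collection of all sources
    (hIndepIh : IndepFun
      (fun ω => fun jlk : Fin J × Fin L × Fin D => I jlk.1 jlk.2.1 jlk.2.2 ω)
      (fun ω => fun jk : Fin J × Fin D => h jk.1 jk.2 ω) μ)
    -- observations
    (a : Fin L → Fin D → Ω → ℝ)
    (ha : ∀ l k ω, a l k ω = ∑ j, I j l k ω * h j k ω) :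
    ∀ l n : Fin L, l ≠ n →
      ∫ ω, (1 / (D : ℝ)) * ∑ k, a l k ω * a n k ω ∂μ = ∑ j, p j l * p j n :=
  expected_correlation_offdiag_general μ J L D hD h hmeas hmom hcorr I hImeas hI01 p hEI hIndepI
    hIndepIh a ha
end

section
/- Under the mixture model, let W be the L×L matrix with entries W_{ln} = E[(1/D) Σ_{k=1}^D a_l(k) a_n(k)], and let P be the L×J matrix with entries P_{lj} = p_j(l). Then W = P Pᵀ + ΔW, where ΔW is the diagonal L×L matrix with diagonal entries ΔW_{ll} = 1 − Σ_{j=1}^J p_j(l)². -/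
/-!
Expand `a_l(k) a_n(k) = ∑_{i,j} I_i(l,k) I_j(n,k) h_i(k) h_j(k)`. Since the indicators are
independent of the sources, each term has expectation `E[I_i(l,k) I_j(n,k)] E[h_i(k) h_j(k)]`,
and orthonormality of the sources leaves only `∑_j E[I_j(l,k) I_j(n,k)]`. For `l = n` the
indicators are idempotent and this is `∑_j p_j(l) = 1`; for `l ≠ n` they are independent and it
is `∑_j p_j(l) p_j(n)`. Neither depends on `k`, so averaging over `k` changes nothing.
-/

open MeasureTheory ProbabilityTheory

section

variable {Ω : Type*} [MeasurableSpace Ω] {μ : Measure Ω}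

lemma integrable_mul_of_integrable_abs_sq {f g : Ω → ℝ}
    (hf : AEStronglyMeasurable f μ) (hg : AEStronglyMeasurable g μ)
    (hf2 : Integrable (fun ω => |f ω| ^ 2) μ) (hg2 : Integrable (fun ω => |g ω| ^ 2) μ) :
    Integrable (fun ω => f ω * g ω) μ :=
  ((memLp_two_iff_integrable_sq_norm hf).2 hf2).integrable_mul
    ((memLp_two_iff_integrable_sq_norm hg).2 hg2)

lemma integrable_mul_of_zero_or_one [IsFiniteMeasure μ] {f g : Ω → ℝ}
    (hf : AEStronglyMeasurable f μ) (hg : AEStronglyMeasurable g μ)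
    (hf01 : ∀ ω, f ω = 0 ∨ f ω = 1) (hg01 : ∀ ω, g ω = 0 ∨ g ω = 1) :
    Integrable (fun ω => f ω * g ω) μ :=
  .of_bound (hf.mul hg) 1 <| ae_of_all _ fun ω => by
    rcases hf01 ω with hf0 | hf1 <;> rcases hg01 ω with hg0 | hg1 <;> simp [*]

lemma integral_mul_self_of_zero_or_one {f : Ω → ℝ} (hf01 : ∀ ω, f ω = 0 ∨ f ω = 1) :
    ∫ ω, f ω * f ω ∂μ = ∫ ω, f ω ∂μ := by
  congr 1 with ω
  rcases hf01 ω with h | h <;> simp [h]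

section RandomCoefficients

variable {ι : Type*} {X X' Y : Ω → ι → ℝ}

lemma ProbabilityTheory.IndepFun.coord_mul_coord (hind : IndepFun (fun ω => (X ω, X' ω)) Y μ)
    (i j : ι) :
    IndepFun (fun ω => X ω i * X' ω j) (fun ω => Y ω i * Y ω j) μ :=
  hind.comp (φ := fun x : (ι → ℝ) × (ι → ℝ) => x.1 i * x.2 j) (ψ := fun y : ι → ℝ => y i * y j)
    (by fun_prop) (by fun_prop)

variable [Fintype ι]

lemma dotProduct_mul_dotProduct_eq_sum (x x' y : ι → ℝ) :
    (x ⬝ᵥ y) * (x' ⬝ᵥ y) = ∑ i, ∑ j, x i * x' j * (y i * y j) := by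
  simp only [dotProduct, Finset.sum_mul_sum]
  exact Finset.sum_congr rfl fun i _ => Finset.sum_congr rfl fun j _ => by ring

lemma integrable_dotProduct_mul_dotProduct_of_indepFun
    (hXX' : ∀ i j, Integrable (fun ω => X ω i * X' ω j) μ)
    (hY : ∀ i j, Integrable (fun ω => Y ω i * Y ω j) μ)
    (hind : IndepFun (fun ω => (X ω, X' ω)) Y μ) :
    Integrable (fun ω => (X ω ⬝ᵥ Y ω) * (X' ω ⬝ᵥ Y ω)) μ := by
  simp_rw [dotProduct_mul_dotProduct_eq_sum]
  exact integrable_finsetSum _ fun i _ => integrable_finsetSum _ fun j _ =>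
    (hind.coord_mul_coord i j).integrable_mul (hXX' i j) (hY i j)

lemma integral_dotProduct_mul_dotProduct_of_indepFun [DecidableEq ι]
    (hXX' : ∀ i j, Integrable (fun ω => X ω i * X' ω j) μ)
    (hY : ∀ i j, Integrable (fun ω => Y ω i * Y ω j) μ)
    (hind : IndepFun (fun ω => (X ω, X' ω)) Y μ)
    (horth : ∀ i j, ∫ ω, Y ω i * Y ω j ∂μ = if i = j then 1 else 0) :
    ∫ ω, (X ω ⬝ᵥ Y ω) * (X' ω ⬝ᵥ Y ω) ∂μ = ∑ i, ∫ ω, X ω i * X' ω i ∂μ := by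
  have hterm : ∀ i j, Integrable (fun ω => X ω i * X' ω j * (Y ω i * Y ω j)) μ :=
    fun i j => (hind.coord_mul_coord i j).integrable_mul (hXX' i j) (hY i j)
  simp_rw [dotProduct_mul_dotProduct_eq_sum]
  rw [integral_finsetSum _ fun i _ => integrable_finsetSum _ fun j _ => hterm i j]
  refine Finset.sum_congr rfl fun i _ => ?_
  rw [integral_finsetSum _ fun j _ => hterm i j]
  simp [(hind.coord_mul_coord _ _).integral_fun_mul_eq_mul_integral (hXX' _ _).1 (hY _ _).1,
    horth]

end RandomCoefficients

section Mixture

variable {ι ν κ : Type*} [DecidableEq ν] {I : ι → ν → κ → Ω → ℝ} {p : ι → ν → ℝ}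

lemma integral_indicator_mul_indicator
    (hImeas : ∀ j l k, Measurable (I j l k)) (hI01 : ∀ j l k ω, I j l k ω = 0 ∨ I j l k ω = 1)
    (hEI : ∀ j l k, ∫ ω, I j l k ω ∂μ = p j l)
    (hIndepI : iIndepFun (fun (lk : ν × κ) ω j => I j lk.1 lk.2 ω) μ)
    (j : ι) (l n : ν) (k : κ) :
    ∫ ω, I j l k ω * I j n k ω ∂μ = if l = n then p j l else p j l * p j n := by
  split_ifs with hln
  · subst hln
    rw [integral_mul_self_of_zero_or_one (hI01 j l k), hEI]
  · have hind : IndepFun (I j l k) (I j n k) μ :=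
      (hIndepI.indepFun (i := (l, k)) (j := (n, k)) (by simp [hln])).comp
        (measurable_pi_apply j) (measurable_pi_apply j)
    rw [hind.integral_fun_mul_eq_mul_integral (hImeas j l k).aestronglyMeasurable
      (hImeas j n k).aestronglyMeasurable, hEI, hEI]

variable [Fintype ι] [DecidableEq ι] [Fintype κ] {h : ι → κ → Ω → ℝ}

lemma integral_average_mixture_mul_mixture [IsProbabilityMeasure μ] [Nonempty κ]
    (hmeas : ∀ j k, Measurable (h j k))
    (hmom : ∀ j k, Integrable (fun ω => |h j k ω| ^ 2) μ)
    (horth : ∀ i j k, ∫ ω, h i k ω * h j k ω ∂μ = if i = j then 1 else 0)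
    (hImeas : ∀ j l k, Measurable (I j l k)) (hI01 : ∀ j l k ω, I j l k ω = 0 ∨ I j l k ω = 1)
    (hp1 : ∀ l, ∑ j, p j l = 1) (hEI : ∀ j l k, ∫ ω, I j l k ω ∂μ = p j l)
    (hIndepI : iIndepFun (fun (lk : ν × κ) ω j => I j lk.1 lk.2 ω) μ)
    (hIndepIh : IndepFun (fun ω (jlk : ι × ν × κ) => I jlk.1 jlk.2.1 jlk.2.2 ω)
      (fun ω (jk : ι × κ) => h jk.1 jk.2 ω) μ)
    (l n : ν) :
    ∫ ω, (1 / (Fintype.card κ : ℝ)) *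
        ∑ k, (∑ j, I j l k ω * h j k ω) * (∑ j, I j n k ω * h j k ω) ∂μ
      = if l = n then 1 else ∑ j, p j l * p j n := by
  have hXX' : ∀ k i j, Integrable (fun ω => I i l k ω * I j n k ω) μ := fun k i j =>
    integrable_mul_of_zero_or_one (hImeas i l k).aestronglyMeasurable
      (hImeas j n k).aestronglyMeasurable (hI01 i l k) (hI01 j n k)
  have hY : ∀ k i j, Integrable (fun ω => h i k ω * h j k ω) μ := fun k i j =>
    integrable_mul_of_integrable_abs_sq (hmeas i k).aestronglyMeasurable
      (hmeas j k).aestronglyMeasurable (hmom i k) (hmom j k)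
  have hind : ∀ k, IndepFun (fun ω => (fun j => I j l k ω, fun j => I j n k ω))
      (fun ω j => h j k ω) μ := fun k =>
    hIndepIh.comp (φ := fun v => (fun j => v (j, l, k), fun j => v (j, n, k)))
      (ψ := fun v j => v (j, k)) (by fun_prop) (by fun_prop)
  have hsample_int : ∀ k, Integrable
      (fun ω => (∑ j, I j l k ω * h j k ω) * (∑ j, I j n k ω * h j k ω)) μ := fun k =>
    integrable_dotProduct_mul_dotProduct_of_indepFun (hXX' k) (hY k) (hind k)
  have hsample : ∀ k, ∫ ω, (∑ j, I j l k ω * h j k ω) * (∑ j, I j n k ω * h j k ω) ∂μ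
      = if l = n then 1 else ∑ j, p j l * p j n := fun k => by
    refine (integral_dotProduct_mul_dotProduct_of_indepFun (hXX' k) (hY k) (hind k)
      (horth · · k)).trans ?_
    simp only [integral_indicator_mul_indicator hImeas hI01 hEI hIndepI]
    split_ifs <;> simp [hp1]
  rw [integral_const_mul, integral_finsetSum _ fun k _ => hsample_int k]
  simp only [hsample, Finset.sum_const, Finset.card_univ, nsmul_eq_mul]
  field_simp

end Mixture

end

theorem correlation_matrix_decomposition_general
    {Ω : Type*} [MeasurableSpace Ω] (μ : Measure Ω) [IsProbabilityMeasure μ]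
    (J L D : ℕ) (hD : 0 < D)
    -- hidden sources
    (h : Fin J → Fin D → Ω → ℝ)
    (hmeas : ∀ j k, Measurable (h j k))
    -- all moments of the sources are finite
    (hmom : ∀ j k (n : ℕ), Integrable (fun ω => |h j k ω| ^ n) μ)
    -- second-moment structure: E[h_i(k) h_j(k')] = δ_{ij} δ_{kk'}
    (hcorr : ∀ (i j : Fin J) (k k' : Fin D),
      ∫ ω, h i k ω * h j k' ω ∂μ = if i = j ∧ k = k' then 1 else 0)
    -- indicators
    (I : Fin J → Fin L → Fin D → Ω → ℝ)
    (hImeas : ∀ j l k, Measurable (I j l k))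
    (hI01 : ∀ j l k ω, I j l k ω = 0 ∨ I j l k ω = 1)
    -- probabilities
    (p : Fin J → Fin L → ℝ)
    (hp1 : ∀ l, ∑ j, p j l = 1)
    (hEI : ∀ j l k, ∫ ω, I j l k ω ∂μ = p j l)
    -- the indicator families associated with distinct pairs (l,k) are mutually independent
    (hIndepI : iIndepFun
      (fun (lk : Fin L × Fin D) ω => fun j => I j lk.1 lk.2 ω) μ)
    -- the collection of all indicators is independent of the collection of all sources
    (hIndepIh : IndepFun
      (fun ω => fun jlk : Fin J × Fin L × Fin D => I jlk.1 jlk.2.1 jlk.2.2 ω)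
      (fun ω => fun jk : Fin J × Fin D => h jk.1 jk.2 ω) μ)
    -- observations
    (a : Fin L → Fin D → Ω → ℝ)
    (ha : ∀ l k ω, a l k ω = ∑ j, I j l k ω * h j k ω)
    (W : Matrix (Fin L) (Fin L) ℝ)
    (hW : ∀ l n, W l n = ∫ ω, (1 / (D : ℝ)) * ∑ k, a l k ω * a n k ω ∂μ)
    (P : Matrix (Fin L) (Fin J) ℝ)
    (hP : ∀ l j, P l j = p j l) :
    W = P * P.transpose + Matrix.diagonal (fun l => 1 - ∑ j, (p j l) ^ 2) := by
  have : NeZero D := ⟨hD.ne'⟩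
  have horth : ∀ i j k, ∫ ω, h i k ω * h j k ω ∂μ = if i = j then 1 else 0 := by
    simp [hcorr]
  ext l n
  have hWln := integral_average_mixture_mul_mixture hmeas (fun j k => hmom j k 2) horth hImeas
    hI01 hp1 hEI hIndepI hIndepIh l n
  simp only [Fintype.card_fin, ← ha] at hWln
  rw [hW, hWln]
  simp only [Matrix.add_apply, Matrix.mul_apply, Matrix.transpose_apply, Matrix.diagonal_apply, hP]
  split_ifs with hln
  · subst hln
    simp [sq]
  · simp

/-- The correlation matrix `W` decomposes as `W = P Pᵀ + ΔW` with
`ΔW` diagonal with entries `1 - ∑ⱼ p_j(l)²`. -/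
theorem correlation_matrix_decomposition
    {Ω : Type*} [MeasurableSpace Ω] (μ : Measure Ω) [IsProbabilityMeasure μ]
    (J L D : ℕ) (hJ : 0 < J) (hL : 0 < L) (hD : 0 < D)
    -- hidden sources
    (h : Fin J → Fin D → Ω → ℝ)
    (hmeas : ∀ j k, Measurable (h j k))
    -- all moments of the sources are finite
    (hmom : ∀ j k (n : ℕ), Integrable (fun ω => |h j k ω| ^ n) μ)
    -- second-moment structure: E[h_i(k) h_j(k')] = δ_{ij} δ_{kk'}
    (hcorr : ∀ (i j : Fin J) (k k' : Fin D),
      ∫ ω, h i k ω * h j k' ω ∂μ = if i = j ∧ k = k' then 1 else 0)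
    -- indicators
    (I : Fin J → Fin L → Fin D → Ω → ℝ)
    (hImeas : ∀ j l k, Measurable (I j l k))
    (hI01 : ∀ j l k ω, I j l k ω = 0 ∨ I j l k ω = 1)
    (hIsum : ∀ l k ω, ∑ j, I j l k ω = 1)
    -- probabilities
    (p : Fin J → Fin L → ℝ)
    (hp0 : ∀ j l, 0 ≤ p j l) (hp1 : ∀ l, ∑ j, p j l = 1)
    (hEI : ∀ j l k, ∫ ω, I j l k ω ∂μ = p j l)
    -- the indicator families associated with distinct pairs (l,k) are mutually independent
    (hIndepI : iIndepFun
      (fun (lk : Fin L × Fin D) ω => fun j => I j lk.1 lk.2 ω) μ)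
    -- the collection of all indicators is independent of the collection of all sources
    (hIndepIh : IndepFun
      (fun ω => fun jlk : Fin J × Fin L × Fin D => I jlk.1 jlk.2.1 jlk.2.2 ω)
      (fun ω => fun jk : Fin J × Fin D => h jk.1 jk.2 ω) μ)
    -- observations
    (a : Fin L → Fin D → Ω → ℝ)
    (ha : ∀ l k ω, a l k ω = ∑ j, I j l k ω * h j k ω)
    (W : Matrix (Fin L) (Fin L) ℝ)
    (hW : ∀ l n, W l n = ∫ ω, (1 / (D : ℝ)) * ∑ k, a l k ω * a n k ω ∂μ)
    (P : Matrix (Fin L) (Fin J) ℝ)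
    (hP : ∀ l j, P l j = p j l) :
    W = P * P.transpose + Matrix.diagonal (fun l => 1 - ∑ j, (p j l) ^ 2) :=
  correlation_matrix_decomposition_general μ J L D hD h hmeas hmom hcorr I hImeas hI01 p hp1 hEI
    hIndepI hIndepIh a ha W hW P hP
end

section
/- Under the mixture model with coordinate-wise independent sources, for any two observation indices l ≠ n, the second moment of the correlation satisfies E[(Σ_{k=1}^D a_l(k) a_n(k))²] = Σ_{k=1}^D Σ_{i=1}^J Σ_{j=1}^J p_i(l) p_j(n) E[h_i(k)² h_j(k)²] + D(D−1) (Σ_{j=1}^J p_j(l) p_j(n))². -/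
open MeasureTheory ProbabilityTheory

/-!
Write `X k = a l k * a n k`, so that the left side is `∑ k k', E[X k * X k']`. For `k ≠ k'` the
data at coordinate `k` (indicators at `(l, k)`, `(n, k)` and the sources at `k`) is independent of
the data at `k'`, so `E[X k * X k'] = E[X k] * E[X k']`; and `E[X k] = ∑ j, p j l * p j n`, because
for `l ≠ n` the indicators at `(l, k)` and `(n, k)` are independent of each other and of the
sources, which are orthonormal. On the diagonal, exactly one indicator of each family is `1`, so
`a l k ^ 2 = ∑ i, I i l k * h i k ^ 2`, and factoring off the indicators gives the first sum.
-/

instance ENNReal.HolderTriple.instFourFourTwo : ENNReal.HolderTriple 4 4 2 where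
  inv_add_inv_eq_inv := by
    rw [← two_mul, show (4 : ENNReal) = 2 * 2 by norm_num, ENNReal.mul_inv (by simp) (by simp),
      ← mul_assoc, ENNReal.mul_inv_cancel (by simp) (by simp), one_mul]

theorem Fintype.exists_sum_mul_eq_apply_of_zero_or_one {ι : Type*} [Fintype ι] {w : ι → ℝ}
    (hw01 : ∀ j, w j = 0 ∨ w j = 1) (hw : ∑ j, w j = 1) :
    ∃ j₀, ∀ x : ι → ℝ, ∑ j, w j * x j = x j₀ := by
  classical
  obtain ⟨j₀, -, hj₀⟩ := Finset.exists_ne_zero_of_sum_ne_zero (hw ▸ one_ne_zero)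
  have hwj₀ : w j₀ = 1 := (hw01 j₀).resolve_left hj₀
  have hw_ne : ∀ j ≠ j₀, w j = 0 := by
    intro j hj
    refine (hw01 j).resolve_right fun hwj => ?_
    have hle := Finset.sum_le_sum_of_subset_of_nonneg (f := w) (Finset.subset_univ {j, j₀})
      fun i _ _ => by rcases hw01 i with h | h <;> simp [h]
    rw [Finset.sum_pair hj, hwj, hwj₀, hw] at hle
    norm_num at hle
  refine ⟨j₀, fun x => ?_⟩
  rw [Finset.sum_eq_single j₀ (fun j _ hj => by rw [hw_ne j hj, zero_mul]) (by simp), hwj₀,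
    one_mul]

theorem Fintype.sq_sum_mul_of_zero_or_one {ι : Type*} [Fintype ι] {w : ι → ℝ}
    (hw01 : ∀ j, w j = 0 ∨ w j = 1) (hw : ∑ j, w j = 1) (x : ι → ℝ) :
    (∑ j, w j * x j) ^ 2 = ∑ j, w j * x j ^ 2 := by
  obtain ⟨j₀, hj₀⟩ := Fintype.exists_sum_mul_eq_apply_of_zero_or_one hw01 hw
  rw [hj₀, hj₀]

theorem Fintype.sum_sum_eq_sum_diag_add_of_ne {ι : Type*} [Fintype ι]
    (f : ι → ι → ℝ) (c : ℝ) (hf : ∀ k k', k ≠ k' → f k k' = c) :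
    ∑ k, ∑ k', f k k' = ∑ k, f k k + Fintype.card ι * (Fintype.card ι - 1) * c := by
  classical
  have hrow : ∀ k, ∑ k', f k k' = f k k + (Fintype.card ι - 1) * c := by
    intro k
    rw [← Finset.add_sum_erase _ _ (Finset.mem_univ k),
      Finset.sum_congr rfl fun k' hk' => hf k k' (Finset.ne_of_mem_erase hk').symm,
      Finset.sum_const, Finset.card_erase_of_mem (Finset.mem_univ k), nsmul_eq_mul,
      Nat.cast_sub (Finset.card_pos.2 ⟨k, Finset.mem_univ k⟩), Finset.card_univ, Nat.cast_one]
  simp only [hrow, Finset.sum_add_distrib, Finset.sum_const, Finset.card_univ, nsmul_eq_mul]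
  ring

theorem MeasureTheory.memLp_of_integrable_abs_pow {Ω : Type*} [MeasurableSpace Ω] {μ : Measure Ω}
    {f : Ω → ℝ} (hf : AEStronglyMeasurable f μ) {n : ℕ} (hn : n ≠ 0)
    (hint : Integrable (fun ω => |f ω| ^ n) μ) : MemLp f n μ := by
  rw [← integrable_norm_rpow_iff hf (by simpa using hn) (by simp)]
  simpa using hint

theorem ProbabilityTheory.IndepFun.prodMk_prodMk_of_indepFun {Ω α β γ δ : Type*}
    [MeasurableSpace Ω] {μ : Measure Ω} [IsZeroOrProbabilityMeasure μ]
    [MeasurableSpace α] [MeasurableSpace β] [MeasurableSpace γ] [MeasurableSpace δ]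
    {A : Ω → α} {B : Ω → β} {C : Ω → γ} {D : Ω → δ}
    (hA : Measurable A) (hB : Measurable B) (hC : Measurable C) (hD : Measurable D)
    (hAB : IndepFun A B μ) (hCD : IndepFun C D μ)
    (h : IndepFun (fun ω ↦ (A ω, B ω)) (fun ω ↦ (C ω, D ω)) μ) :
    IndepFun (fun ω ↦ (A ω, C ω)) (fun ω ↦ (B ω, D ω)) μ := by
  have hAC : IndepFun A C μ := h.comp measurable_fst measurable_fst
  have hBD : IndepFun B D μ := h.comp measurable_snd measurable_snd
  rw [IndepFun_iff_Indep]
  refine IndepSets.indep (hA.prodMk hC).comap_le (hB.prodMk hD).comap_le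
    (isPiSystem_prod.comap _) (isPiSystem_prod.comap _)
    (by rw [← generateFrom_prod, MeasurableSpace.comap_generateFrom]; rfl)
    (by rw [← generateFrom_prod, MeasurableSpace.comap_generateFrom]; rfl) ?_
  rw [IndepSets_iff]
  rintro _ _ ⟨_, ⟨a, ha, c, hc, rfl⟩, rfl⟩ ⟨_, ⟨b, hb, d, hd, rfl⟩, rfl⟩
  have hABCD := h.measure_inter_preimage_eq_mul _ _ (ha.prod hb) (hc.prod hd)
  simp only [Set.mk_preimage_prod] at hABCD ⊢
  rw [Set.inter_inter_inter_comm, hABCD,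
    hAB.measure_inter_preimage_eq_mul _ _ ha hb, hCD.measure_inter_preimage_eq_mul _ _ hc hd,
    hAC.measure_inter_preimage_eq_mul _ _ ha hc, hBD.measure_inter_preimage_eq_mul _ _ hb hd]
  ring

section MixtureModel

variable {Ω : Type*} [MeasurableSpace Ω] {J L D : ℕ}

structure IsMixtureModel (μ : Measure Ω) (h : Fin J → Fin D → Ω → ℝ)
    (I : Fin J → Fin L → Fin D → Ω → ℝ) (p : Fin J → Fin L → ℝ) (a : Fin L → Fin D → Ω → ℝ) :
    Prop where
  measurable_source : ∀ j k, Measurable (h j k)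
  integrable_abs_pow_source : ∀ j k (n : ℕ), Integrable (fun ω => |h j k ω| ^ n) μ
  integral_source_mul_source : ∀ (i j : Fin J) (k k' : Fin D),
    ∫ ω, h i k ω * h j k' ω ∂μ = if i = j ∧ k = k' then 1 else 0
  measurable_indicator : ∀ j l k, Measurable (I j l k)
  indicator_eq_zero_or_one : ∀ j l k ω, I j l k ω = 0 ∨ I j l k ω = 1
  sum_indicator : ∀ l k ω, ∑ j, I j l k ω = 1
  integral_indicator : ∀ j l k, ∫ ω, I j l k ω ∂μ = p j l
  iIndepFun_indicator : iIndepFun (fun (lk : Fin L × Fin D) ω => fun j => I j lk.1 lk.2 ω) μ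
  indepFun_indicator_source : IndepFun
    (fun ω => fun jlk : Fin J × Fin L × Fin D => I jlk.1 jlk.2.1 jlk.2.2 ω)
    (fun ω => fun jk : Fin J × Fin D => h jk.1 jk.2 ω) μ
  iIndepFun_source : iIndepFun (fun (k : Fin D) ω => fun j => h j k ω) μ
  observation_eq : ∀ l k ω, a l k ω = ∑ j, I j l k ω * h j k ω

namespace IsMixtureModel

variable {μ : Measure Ω} {h : Fin J → Fin D → Ω → ℝ} {I : Fin J → Fin L → Fin D → Ω → ℝ}
  {p : Fin J → Fin L → ℝ} {a : Fin L → Fin D → Ω → ℝ}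

theorem memLp_source (hM : IsMixtureModel μ h I p a) {n : ℕ} (hn : n ≠ 0) (j : Fin J)
    (k : Fin D) : MemLp (h j k) n μ :=
  memLp_of_integrable_abs_pow (hM.measurable_source j k).aestronglyMeasurable hn
    (hM.integrable_abs_pow_source j k n)

theorem memLp_observation (hM : IsMixtureModel μ h I p a) (l : Fin L) (k : Fin D) :
    MemLp (a l k) 4 μ := by
  have hI : ∀ j, MemLp (I j l k) ⊤ μ := fun j =>
    memLp_top_of_bound (hM.measurable_indicator j l k).aestronglyMeasurable 1
      (ae_of_all _ fun ω => by
        rcases hM.indicator_eq_zero_or_one j l k ω with hω | hω <;> simp [hω])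
  rw [show a l k = fun ω => ∑ j, I j l k ω * h j k ω from funext (hM.observation_eq l k)]
  exact memLp_finsetSum _ fun j _ => (hM.memLp_source four_ne_zero j k).mul' (hI j)

theorem integrable_indicator_mul_indicator_mul (hM : IsMixtureModel μ h I p a) (i j : Fin J)
    (l n : Fin L) (k : Fin D) {f : Ω → ℝ} (hf : Integrable f μ) :
    Integrable (fun ω => I i l k ω * I j n k ω * f ω) μ :=
  hf.bdd_mul (c := 1)
    ((hM.measurable_indicator i l k).mul (hM.measurable_indicator j n k)).aestronglyMeasurable
    (ae_of_all _ fun ω => by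
      rcases hM.indicator_eq_zero_or_one i l k ω with h₁ | h₁ <;>
        rcases hM.indicator_eq_zero_or_one j n k ω with h₂ | h₂ <;> simp [h₁, h₂])

theorem integral_indicator_mul_indicator_mul_comp_sources (hM : IsMixtureModel μ h I p a)
    {l n : Fin L} (hln : l ≠ n) (i j : Fin J) (k : Fin D) {G : (Fin J × Fin D → ℝ) → ℝ}
    (hG : Measurable G) :
    ∫ ω, I i l k ω * I j n k ω * G (fun jk => h jk.1 jk.2 ω) ∂μ
      = p i l * p j n * ∫ ω, G (fun jk => h jk.1 jk.2 ω) ∂μ := by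
  have hII : IndepFun (I i l k) (I j n k) μ :=
    (hM.iIndepFun_indicator.indepFun (i := (l, k)) (j := (n, k)) (by simp [hln])).comp
      (measurable_pi_apply i) (measurable_pi_apply j)
  have hIG : IndepFun (fun ω => I i l k ω * I j n k ω) (fun ω => G (fun jk => h jk.1 jk.2 ω)) μ :=
    hM.indepFun_indicator_source.comp
      ((measurable_pi_apply (i, l, k)).mul (measurable_pi_apply (j, n, k))) hG
  have hGmeas : Measurable fun ω => G (fun jk => h jk.1 jk.2 ω) :=
    hG.comp (measurable_pi_lambda _ fun jk => hM.measurable_source jk.1 jk.2)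
  rw [hIG.integral_fun_mul_eq_mul_integral
      ((hM.measurable_indicator i l k).mul (hM.measurable_indicator j n k)).aestronglyMeasurable
      hGmeas.aestronglyMeasurable,
    hII.integral_fun_mul_eq_mul_integral (hM.measurable_indicator i l k).aestronglyMeasurable
      (hM.measurable_indicator j n k).aestronglyMeasurable,
    hM.integral_indicator, hM.integral_indicator]

theorem integral_observation_mul_observation (hM : IsMixtureModel μ h I p a) {l n : Fin L}
    (hln : l ≠ n) (k : Fin D) : ∫ ω, a l k ω * a n k ω ∂μ = ∑ j, p j l * p j n := by
  have h2 : ∀ j, MemLp (h j k) 2 μ := fun j => hM.memLp_source two_ne_zero j k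
  have hint : ∀ i j, Integrable (fun ω => I i l k ω * I j n k ω * (h i k ω * h j k ω)) μ :=
    fun i j => hM.integrable_indicator_mul_indicator_mul i j l n k ((h2 i).integrable_mul (h2 j))
  have hexpand : ∀ ω, a l k ω * a n k ω
      = ∑ i, ∑ j, I i l k ω * I j n k ω * (h i k ω * h j k ω) := fun ω => by
    rw [hM.observation_eq, hM.observation_eq, Finset.sum_mul_sum]
    exact Finset.sum_congr rfl fun i _ => Finset.sum_congr rfl fun j _ => by ring
  calc ∫ ω, a l k ω * a n k ω ∂μ
      = ∑ i, ∑ j, p i l * p j n * ∫ ω, h i k ω * h j k ω ∂μ := by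
        simp only [hexpand]
        rw [integral_finsetSum _ fun i _ => integrable_finsetSum _ fun j _ => hint i j]
        refine Finset.sum_congr rfl fun i _ => ?_
        rw [integral_finsetSum _ fun j _ => hint i j]
        exact Finset.sum_congr rfl fun j _ => hM.integral_indicator_mul_indicator_mul_comp_sources
          (G := fun g => g (i, k) * g (j, k)) hln i j k (by fun_prop)
    _ = ∑ j, p j l * p j n := by simp [hM.integral_source_mul_source]

theorem integral_observation_mul_observation_sq (hM : IsMixtureModel μ h I p a) {l n : Fin L}
    (hln : l ≠ n) (k : Fin D) :
    ∫ ω, (a l k ω * a n k ω) ^ 2 ∂μ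
      = ∑ i, ∑ j, p i l * p j n * ∫ ω, h i k ω ^ 2 * h j k ω ^ 2 ∂μ := by
  have hsq : ∀ j, MemLp (fun ω => h j k ω ^ 2) 2 μ := fun j => by
    have h4 : MemLp (h j k) 4 μ := hM.memLp_source four_ne_zero j k
    simpa only [sq] using h4.mul' h4
  have hint : ∀ i j, Integrable
      (fun ω => I i l k ω * I j n k ω * (h i k ω ^ 2 * h j k ω ^ 2)) μ :=
    fun i j => hM.integrable_indicator_mul_indicator_mul i j l n k
      ((hsq i).integrable_mul (hsq j))
  have hobs_sq : ∀ l ω, a l k ω ^ 2 = ∑ j, I j l k ω * h j k ω ^ 2 := fun l ω => by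
    rw [hM.observation_eq, Fintype.sq_sum_mul_of_zero_or_one
      (hM.indicator_eq_zero_or_one · l k ω) (hM.sum_indicator l k ω)]
  have hexpand : ∀ ω, (a l k ω * a n k ω) ^ 2
      = ∑ i, ∑ j, I i l k ω * I j n k ω * (h i k ω ^ 2 * h j k ω ^ 2) := fun ω => by
    rw [mul_pow, hobs_sq, hobs_sq, Finset.sum_mul_sum]
    exact Finset.sum_congr rfl fun i _ => Finset.sum_congr rfl fun j _ => by ring
  simp only [hexpand]
  rw [integral_finsetSum _ fun i _ => integrable_finsetSum _ fun j _ => hint i j]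
  refine Finset.sum_congr rfl fun i _ => ?_
  rw [integral_finsetSum _ fun j _ => hint i j]
  exact Finset.sum_congr rfl fun j _ => hM.integral_indicator_mul_indicator_mul_comp_sources
    (G := fun g => g (i, k) ^ 2 * g (j, k) ^ 2) hln i j k (by fun_prop)

theorem indepFun_observation_mul_observation [IsProbabilityMeasure μ]
    (hM : IsMixtureModel μ h I p a) (l n : Fin L) {k k' : Fin D} (hkk' : k ≠ k') :
    IndepFun (fun ω => a l k ω * a n k ω) (fun ω => a l k' ω * a n k' ω) μ := by
  have hIvec : ∀ lk : Fin L × Fin D, Measurable fun ω j => I j lk.1 lk.2 ω :=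
    fun lk => measurable_pi_lambda _ fun j => hM.measurable_indicator j lk.1 lk.2
  have hhvec : ∀ k : Fin D, Measurable fun ω j => h j k ω :=
    fun k => measurable_pi_lambda _ fun j => hM.measurable_source j k
  have hI : IndepFun (fun ω => (fun j => I j l k ω, fun j => I j n k ω))
      (fun ω => (fun j => I j l k' ω, fun j => I j n k' ω)) μ :=
    hM.iIndepFun_indicator.indepFun_prodMk_prodMk hIvec (l, k) (n, k) (l, k') (n, k')
      (by simp [hkk']) (by simp [hkk']) (by simp [hkk']) (by simp [hkk'])
  have hIh : IndepFun
      (fun ω => ((fun j => I j l k ω, fun j => I j n k ω),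
        (fun j => I j l k' ω, fun j => I j n k' ω)))
      (fun ω => (fun j => h j k ω, fun j => h j k' ω)) μ :=
    hM.indepFun_indicator_source.comp
      (φ := fun f => ((fun j => f (j, l, k), fun j => f (j, n, k)),
        (fun j => f (j, l, k'), fun j => f (j, n, k'))))
      (ψ := fun g => (fun j => g (j, k), fun j => g (j, k'))) (by fun_prop) (by fun_prop)
  have hcoord := IndepFun.prodMk_prodMk_of_indepFun ((hIvec (l, k)).prodMk (hIvec (n, k)))
    ((hIvec (l, k')).prodMk (hIvec (n, k'))) (hhvec k) (hhvec k') hI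
    (hM.iIndepFun_source.indepFun hkk') hIh
  simp only [hM.observation_eq]
  exact hcoord.comp (φ := fun x => (∑ j, x.1.1 j * x.2 j) * ∑ j, x.1.2 j * x.2 j)
    (ψ := fun x => (∑ j, x.1.1 j * x.2 j) * ∑ j, x.1.2 j * x.2 j) (by fun_prop) (by fun_prop)

end IsMixtureModel

end MixtureModel

theorem second_moment_correlation_general
    {Ω : Type*} [MeasurableSpace Ω] (μ : Measure Ω) [IsProbabilityMeasure μ]
    (J L D : ℕ)
    -- hidden sources
    (h : Fin J → Fin D → Ω → ℝ)
    (hmeas : ∀ j k, Measurable (h j k))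
    -- all moments of the sources are finite
    (hmom : ∀ j k (n : ℕ), Integrable (fun ω => |h j k ω| ^ n) μ)
    -- second-moment structure: E[h_i(k) h_j(k')] = δ_{ij} δ_{kk'}
    (hcorr : ∀ (i j : Fin J) (k k' : Fin D),
      ∫ ω, h i k ω * h j k' ω ∂μ = if i = j ∧ k = k' then 1 else 0)
    -- indicators
    (I : Fin J → Fin L → Fin D → Ω → ℝ)
    (hImeas : ∀ j l k, Measurable (I j l k))
    (hI01 : ∀ j l k ω, I j l k ω = 0 ∨ I j l k ω = 1)
    (hIsum : ∀ l k ω, ∑ j, I j l k ω = 1)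
    -- probabilities
    (p : Fin J → Fin L → ℝ)
    (hEI : ∀ j l k, ∫ ω, I j l k ω ∂μ = p j l)
    -- the indicator families associated with distinct pairs (l,k) are mutually independent
    (hIndepI : iIndepFun
      (fun (lk : Fin L × Fin D) ω => fun j => I j lk.1 lk.2 ω) μ)
    -- the collection of all indicators is independent of the collection of all sources
    (hIndepIh : IndepFun
      (fun ω => fun jlk : Fin J × Fin L × Fin D => I jlk.1 jlk.2.1 jlk.2.2 ω)
      (fun ω => fun jk : Fin J × Fin D => h jk.1 jk.2 ω) μ)
    -- observations
    (a : Fin L → Fin D → Ω → ℝ)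
    (ha : ∀ l k ω, a l k ω = ∑ j, I j l k ω * h j k ω)
    -- coordinate-wise independence of the sources
    (hIndeph : iIndepFun
      (fun (k : Fin D) ω => fun j => h j k ω) μ) :
    ∀ l n : Fin L, l ≠ n →
      ∫ ω, (∑ k, a l k ω * a n k ω) ^ 2 ∂μ =
        (∑ k, ∑ i, ∑ j, p i l * p j n * ∫ ω, (h i k ω) ^ 2 * (h j k ω) ^ 2 ∂μ)
          + (D : ℝ) * ((D : ℝ) - 1) * (∑ j, p j l * p j n) ^ 2 := by
  intro l n hln
  have hM : IsMixtureModel μ h I p a :=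
    ⟨hmeas, hmom, hcorr, hImeas, hI01, hIsum, hEI, hIndepI, hIndepIh, hIndeph, ha⟩
  have hX : ∀ k, MemLp (fun ω => a l k ω * a n k ω) 2 μ := fun k =>
    (hM.memLp_observation n k).mul' (hM.memLp_observation l k)
  have hXX : ∀ k k', Integrable (fun ω => (a l k ω * a n k ω) * (a l k' ω * a n k' ω)) μ :=
    fun k k' => (hX k).integrable_mul (hX k')
  have hoff : ∀ k k', k ≠ k' →
      ∫ ω, (a l k ω * a n k ω) * (a l k' ω * a n k' ω) ∂μ = (∑ j, p j l * p j n) ^ 2 :=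
    fun k k' hkk' => by
      rw [(hM.indepFun_observation_mul_observation l n hkk').integral_fun_mul_eq_mul_integral
        (hX k).aestronglyMeasurable (hX k').aestronglyMeasurable,
        hM.integral_observation_mul_observation hln, hM.integral_observation_mul_observation hln,
        sq]
  calc ∫ ω, (∑ k, a l k ω * a n k ω) ^ 2 ∂μ
      = ∑ k, ∑ k', ∫ ω, (a l k ω * a n k ω) * (a l k' ω * a n k' ω) ∂μ := by
        simp only [sq, Finset.sum_mul_sum]
        rw [integral_finsetSum _ fun k _ => integrable_finsetSum _ fun k' _ => hXX k k']
        exact Finset.sum_congr rfl fun k _ => integral_finsetSum _ fun k' _ => hXX k k'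
    _ = _ := by
        rw [Fintype.sum_sum_eq_sum_diag_add_of_ne _ _ hoff, Fintype.card_fin]
        simp only [← sq, hM.integral_observation_mul_observation_sq hln]

/-- Second moment of the (unnormalized) correlation for `l ≠ n`. -/
theorem second_moment_correlation
    {Ω : Type*} [MeasurableSpace Ω] (μ : Measure Ω) [IsProbabilityMeasure μ]
    (J L D : ℕ) (hJ : 0 < J) (hL : 0 < L) (hD : 0 < D)
    -- hidden sources
    (h : Fin J → Fin D → Ω → ℝ)
    (hmeas : ∀ j k, Measurable (h j k))
    -- all moments of the sources are finite
    (hmom : ∀ j k (n : ℕ), Integrable (fun ω => |h j k ω| ^ n) μ)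
    -- second-moment structure: E[h_i(k) h_j(k')] = δ_{ij} δ_{kk'}
    (hcorr : ∀ (i j : Fin J) (k k' : Fin D),
      ∫ ω, h i k ω * h j k' ω ∂μ = if i = j ∧ k = k' then 1 else 0)
    -- indicators
    (I : Fin J → Fin L → Fin D → Ω → ℝ)
    (hImeas : ∀ j l k, Measurable (I j l k))
    (hI01 : ∀ j l k ω, I j l k ω = 0 ∨ I j l k ω = 1)
    (hIsum : ∀ l k ω, ∑ j, I j l k ω = 1)
    -- probabilities
    (p : Fin J → Fin L → ℝ)
    (hp0 : ∀ j l, 0 ≤ p j l) (hp1 : ∀ l, ∑ j, p j l = 1)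
    (hEI : ∀ j l k, ∫ ω, I j l k ω ∂μ = p j l)
    -- the indicator families associated with distinct pairs (l,k) are mutually independent
    (hIndepI : iIndepFun
      (fun (lk : Fin L × Fin D) ω => fun j => I j lk.1 lk.2 ω) μ)
    -- the collection of all indicators is independent of the collection of all sources
    (hIndepIh : IndepFun
      (fun ω => fun jlk : Fin J × Fin L × Fin D => I jlk.1 jlk.2.1 jlk.2.2 ω)
      (fun ω => fun jk : Fin J × Fin D => h jk.1 jk.2 ω) μ)
    -- observations
    (a : Fin L → Fin D → Ω → ℝ)
    (ha : ∀ l k ω, a l k ω = ∑ j, I j l k ω * h j k ω)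
    -- coordinate-wise independence of the sources
    (hIndeph : iIndepFun
      (fun (k : Fin D) ω => fun j => h j k ω) μ) :
    ∀ l n : Fin L, l ≠ n →
      ∫ ω, (∑ k, a l k ω * a n k ω) ^ 2 ∂μ =
        (∑ k, ∑ i, ∑ j, p i l * p j n * ∫ ω, (h i k ω) ^ 2 * (h j k ω) ^ 2 ∂μ)
          + (D : ℝ) * ((D : ℝ) - 1) * (∑ j, p j l * p j n) ^ 2 :=
  second_moment_correlation_general μ J L D h hmeas hmom hcorr I hImeas hI01 hIsum p hEI hIndepI
    hIndepIh a ha hIndeph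
end

section
/- Let E be a real inner product space, let V = {v_1,…,v_J} be a finite set of points in E, and let S be a finite set of points with V ⊆ S ⊆ convexHull(V). If x ∈ S attains the maximum of the norm ‖·‖ over S, then x ∈ V. -/
open scoped RealInnerProductSpace

/-- Let `V = {v₁,…,v_J}` and let `S` be a finite set with
`V ⊆ S ⊆ convexHull V`. A point of `S` of maximal norm belongs to `V`. -/
theorem max_norm_point_is_vertex
    {E : Type*} [NormedAddCommGroup E] [InnerProductSpace ℝ E]
    (J : ℕ) (v : Fin J → E) (S : Finset E)
    (hVS : ∀ j, v j ∈ S)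
    (hSV : ∀ y ∈ S, y ∈ convexHull ℝ (Set.range v))
    (x : E) (hxS : x ∈ S) (hmax : ∀ y ∈ S, ‖y‖ ≤ ‖x‖) :
    x ∈ Set.range v := by
  classical
  set t : Finset E := Finset.image v Finset.univ with ht
  have htr : (t : Set E) = Set.range v := by
    simp [ht, Set.range_comp]
  have hx : x ∈ convexHull ℝ (t : Set E) := by
    rw [htr]; exact hSV x hxS
  rw [Finset.mem_convexHull'] at hx
  obtain ⟨w, hw₀, hw₁, hwx⟩ := hx
  -- every element of t has norm ≤ ‖x‖
  have hnorm : ∀ y ∈ t, ‖y‖ ≤ ‖x‖ := by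
    intro y hy
    obtain ⟨j, -, rfl⟩ := Finset.mem_image.mp hy
    exact hmax _ (hVS j)
  -- inner product bound
  have hinner : ∀ y ∈ t, ⟪x, y⟫ ≤ ‖x‖ ^ 2 := by
    intro y hy
    calc ⟪x, y⟫ ≤ ‖x‖ * ‖y‖ := real_inner_le_norm x y
      _ ≤ ‖x‖ * ‖x‖ := by
          exact mul_le_mul_of_nonneg_left (hnorm y hy) (norm_nonneg x)
      _ = ‖x‖ ^ 2 := by ring
  have hsum : ∑ y ∈ t, w y * ⟪x, y⟫ = ‖x‖ ^ 2 := by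
    have : ⟪x, x⟫ = ∑ y ∈ t, w y * ⟪x, y⟫ := by
      nth_rewrite 2 [← hwx]
      rw [inner_sum]
      exact Finset.sum_congr rfl fun y hy => real_inner_smul_right x y (w y)
    rw [← this, real_inner_self_eq_norm_sq]
  -- there is y₀ ∈ t with w y₀ > 0
  obtain ⟨y₀, hy₀t, hy₀w⟩ : ∃ y ∈ t, 0 < w y := by
    by_contra h
    push_neg at h
    have : ∑ y ∈ t, w y = 0 := Finset.sum_eq_zero fun y hy =>
      le_antisymm (h y hy) (hw₀ y hy)
    rw [hw₁] at this; norm_num at this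
  -- equality in the sum forces ⟪x, y₀⟫ = ‖x‖²
  have heq : ⟪x, y₀⟫ = ‖x‖ ^ 2 := by
    by_contra hne
    have hlt : ⟪x, y₀⟫ < ‖x‖ ^ 2 := lt_of_le_of_ne (hinner y₀ hy₀t) hne
    have : ∑ y ∈ t, w y * ⟪x, y⟫ < ∑ y ∈ t, w y * ‖x‖ ^ 2 := by
      refine Finset.sum_lt_sum (fun y hy => ?_) ⟨y₀, hy₀t, ?_⟩
      · exact mul_le_mul_of_nonneg_left (hinner y hy) (hw₀ y hy)
      · exact mul_lt_mul_of_pos_left hlt hy₀w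
    rw [hsum, ← Finset.sum_mul, hw₁, one_mul] at this
    exact lt_irrefl _ this
  -- conclude y₀ = x
  have hxy : x = y₀ := by
    have hny : ‖x‖ ≤ ‖y₀‖ := by
      have h1 : ‖x‖ ^ 2 ≤ ‖x‖ * ‖y₀‖ := heq ▸ real_inner_le_norm x y₀
      rcases eq_or_lt_of_le (norm_nonneg x) with h0 | h0
      · rw [← h0]; exact norm_nonneg y₀
      · nlinarith
    have : ‖x - y₀‖ ^ 2 = 0 := by
      rw [norm_sub_sq_real, heq]
      nlinarith [hnorm y₀ hy₀t, norm_nonneg x, norm_nonneg y₀]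
    have h2 : ‖x - y₀‖ = 0 := pow_eq_zero_iff (n := 2) (by norm_num) |>.mp this
    exact sub_eq_zero.mp (norm_eq_zero.mp h2)
  rw [← htr]
  exact hxy ▸ hy₀t
end

section
/- Let E be a real inner product space, let V = {v_1,…,v_J} be a finite set of points in E, let S be a finite set with V ⊆ S ⊆ convexHull(V), and let c ∈ E be any point. If x ∈ S attains the maximum of ‖· − c‖ over S, then x ∈ V. Moreover, if c ∈ V and V contains at least two distinct points, then x ≠ c. -/
open scoped RealInnerProductSpace


/-- Let `V = {v₁,…,v_J}` and `S` finite with `V ⊆ S ⊆ convexHull V`,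
and `c` any point. A point of `S` maximizing the distance to `c` belongs to `V`;
moreover, if `c ∈ V` and `V` contains two distinct points, the maximizer differs from `c`. -/
theorem max_dist_point_is_vertex
    {E : Type*} [NormedAddCommGroup E] [InnerProductSpace ℝ E]
    (J : ℕ) (v : Fin J → E) (S : Finset E)
    (hVS : ∀ j, v j ∈ S)
    (hSV : ∀ y ∈ S, y ∈ convexHull ℝ (Set.range v))
    (c : E) (x : E) (hxS : x ∈ S) (hmax : ∀ y ∈ S, ‖y - c‖ ≤ ‖x - c‖) :
    x ∈ Set.range v ∧
      (c ∈ Set.range v → (∃ i j : Fin J, v i ≠ v j) → x ≠ c) := by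
  have hx := hSV x hxS
  rw [convexHull_range_eq_exists_affineCombination] at hx
  obtain ⟨s, w, hw0, hw1, hxw⟩ := hx
  have hxw' : ∑ i ∈ s, w i • v i = x := by
    rw [← hxw, Finset.affineCombination_eq_linear_combination s v w hw1]
  constructor
  · -- main part
    -- key identity: ∑ w ‖v i - c‖² = ∑ w ‖v i - x‖² + ‖x - c‖²
    have hsum0 : ∑ i ∈ s, w i • (v i - x) = 0 := by
      simp only [smul_sub, Finset.sum_sub_distrib, hxw', ← Finset.sum_smul, hw1, one_smul,
        sub_self]
    have hinner : ∑ i ∈ s, w i * ⟪v i - x, x - c⟫ = 0 := by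
      have := sum_inner (𝕜 := ℝ) (fun i => w i • (v i - x)) (x - c) (s := s)
      simp only [real_inner_smul_left] at this
      rw [← this, hsum0, inner_zero_left]
    have hident : ∑ i ∈ s, w i * ‖v i - c‖ ^ 2
        = (∑ i ∈ s, w i * ‖v i - x‖ ^ 2) + ‖x - c‖ ^ 2 := by
      have expand : ∀ i, ‖v i - c‖ ^ 2
          = ‖v i - x‖ ^ 2 + 2 * ⟪v i - x, x - c⟫ + ‖x - c‖ ^ 2 := by
        intro i
        have : v i - c = (v i - x) + (x - c) := by abel
        rw [this, norm_add_sq_real]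
      calc ∑ i ∈ s, w i * ‖v i - c‖ ^ 2
          = ∑ i ∈ s, (w i * ‖v i - x‖ ^ 2 + 2 * (w i * ⟪v i - x, x - c⟫)
              + w i * ‖x - c‖ ^ 2) := by
            refine Finset.sum_congr rfl fun i _ => ?_
            rw [expand i]; ring
        _ = (∑ i ∈ s, w i * ‖v i - x‖ ^ 2) + 2 * (∑ i ∈ s, w i * ⟪v i - x, x - c⟫)
              + (∑ i ∈ s, w i) * ‖x - c‖ ^ 2 := by
            rw [Finset.sum_add_distrib, Finset.sum_add_distrib, Finset.mul_sum,
              Finset.sum_mul]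
        _ = (∑ i ∈ s, w i * ‖v i - x‖ ^ 2) + ‖x - c‖ ^ 2 := by
            rw [hinner, hw1]; ring
    have hle : ∑ i ∈ s, w i * ‖v i - c‖ ^ 2 ≤ ‖x - c‖ ^ 2 := by
      calc ∑ i ∈ s, w i * ‖v i - c‖ ^ 2
          ≤ ∑ i ∈ s, w i * ‖x - c‖ ^ 2 := by
            refine Finset.sum_le_sum fun i hi => ?_
            exact mul_le_mul_of_nonneg_left
              (pow_le_pow_left₀ (norm_nonneg _) (hmax _ (hVS i)) 2) (hw0 i hi)
        _ = ‖x - c‖ ^ 2 := by rw [← Finset.sum_mul, hw1, one_mul]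
    have hzero : ∑ i ∈ s, w i * ‖v i - x‖ ^ 2 ≤ 0 := by linarith [hident, hle]
    have heach : ∀ i ∈ s, w i * ‖v i - x‖ ^ 2 = 0 := by
      intro i hi
      have hnn : ∀ j ∈ s, 0 ≤ w j * ‖v j - x‖ ^ 2 :=
        fun j hj => mul_nonneg (hw0 j hj) (by positivity)
      have := Finset.sum_nonneg hnn
      have hsum_eq : ∑ i ∈ s, w i * ‖v i - x‖ ^ 2 = 0 := le_antisymm hzero this
      exact (Finset.sum_eq_zero_iff_of_nonneg hnn).mp hsum_eq i hi
    obtain ⟨i, hi, hwi⟩ : ∃ i ∈ s, w i ≠ 0 := by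
      by_contra h
      push_neg at h
      have : ∑ i ∈ s, w i = 0 := Finset.sum_eq_zero h
      rw [hw1] at this; norm_num at this
    have : ‖v i - x‖ ^ 2 = 0 := by
      rcases mul_eq_zero.mp (heach i hi) with h | h
      · exact absurd h hwi
      · exact h
    have : v i = x := by
      have h1 := pow_eq_zero_iff (n := 2) (by norm_num) |>.mp this
      exact sub_eq_zero.mp (norm_eq_zero.mp h1)
    exact ⟨i, this⟩
  · rintro ⟨k, rfl⟩ ⟨i, j, hij⟩
    have : v i ≠ v k ∨ v j ≠ v k := by
      by_contra h; push_neg at h; exact hij (h.1.trans h.2.symm)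
    obtain ⟨m, hm⟩ : ∃ m, v m ≠ v k := this.elim (⟨i, ·⟩) (⟨j, ·⟩)
    have hpos : 0 < ‖v m - v k‖ := by
      rw [norm_pos_iff, sub_ne_zero]; exact hm
    have := hmax (v m) (hVS m)
    intro hxc
    rw [hxc, sub_self, norm_zero] at this
    linarith
end

section
/- Let v_1,…,v_J be affinely independent points in a finite-dimensional real inner product space E, and let S be a finite set with {v_1,…,v_J} ⊆ S ⊆ convexHull{v_1,…,v_J}. Fix 2 ≤ r ≤ J, and let Π be the orthogonal projection of E onto the orthogonal complement of the linear span of {v_2 − v_1, …, v_{r−1} − v_1} (the span being the zero subspace when r = 2). If x ∈ S attains the maximum of ‖Π(· − v_1)‖ over S, then x = v_i for some i ∈ {r,…,J}. -/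
/-!
Let `Π` be the projection and `wᵢ = Π (vᵢ - v₁)`. Write `x = ∑ cᵢ vᵢ` as a convex combination;
since `y ↦ Π (y - v₁)` is affine, `Π (x - v₁) = ∑ cᵢ wᵢ =: w`. The variance identity
`∑ cᵢ ‖wᵢ - w‖² = ∑ cᵢ ‖wᵢ‖² - ‖w‖²` together with `‖wᵢ‖ ≤ ‖w‖` (maximality of `x`) forces
`wᵢ = w` for every vertex carrying weight. Two such vertices then differ by a vector of
`ker Π = span {v₂ - v₁, …, v_{r-1} - v₁}`, which affine independence forbids unless they coincide
or one of them is among `v₁, …, v_{r-1}`. The latter would put `x` into the affine span of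
`v₁, …, v_{r-1}`, where `Π (· - v₁)` vanishes, whereas `Π (v_r - v₁) ≠ 0`. Hence a single vertex
carries all the weight, and `x` is that vertex.
-/

open Finset RealInnerProductSpace

section

variable {ι F : Type*} [NormedAddCommGroup F] [InnerProductSpace ℝ F]

theorem Finset.sum_mul_norm_sub_sum_smul_sq (t : Finset ι) {c : ι → ℝ} (hc : ∑ i ∈ t, c i = 1)
    (w : ι → F) :
    ∑ i ∈ t, c i * ‖w i - ∑ j ∈ t, c j • w j‖ ^ 2 =
      ∑ i ∈ t, c i * ‖w i‖ ^ 2 - ‖∑ j ∈ t, c j • w j‖ ^ 2 := by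
  set m := ∑ j ∈ t, c j • w j
  have hm : ∑ i ∈ t, c i * ⟪w i, m⟫ = ‖m‖ ^ 2 := by
    simp only [← real_inner_self_eq_norm_sq, m, sum_inner, real_inner_smul_left]
  simp only [norm_sub_sq_real, mul_add, mul_sub, sum_add_distrib, sum_sub_distrib, ← sum_mul, hc]
  simp only [mul_left_comm _ (2 : ℝ), ← mul_sum, hm]
  ring

theorem Finset.eq_sum_smul_of_forall_norm_le {t : Finset ι} {c : ι → ℝ} {w : ι → F}
    (hc₀ : ∀ i ∈ t, 0 ≤ c i) (hc₁ : ∑ i ∈ t, c i = 1)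
    (hw : ∀ i ∈ t, ‖w i‖ ≤ ‖∑ j ∈ t, c j • w j‖) {i : ι} (hi : i ∈ t) (hci : c i ≠ 0) :
    w i = ∑ j ∈ t, c j • w j := by
  set m := ∑ j ∈ t, c j • w j
  have hterm : ∀ j ∈ t, 0 ≤ c j * ‖w j - m‖ ^ 2 := fun j hj =>
    mul_nonneg (hc₀ j hj) (by positivity)
  have hsum : ∑ j ∈ t, c j * ‖w j - m‖ ^ 2 ≤ 0 := by
    rw [t.sum_mul_norm_sub_sum_smul_sq hc₁, sub_nonpos]
    calc ∑ j ∈ t, c j * ‖w j‖ ^ 2 ≤ ∑ j ∈ t, c j * ‖m‖ ^ 2 := by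
          gcongr with j hj
          · exact hc₀ j hj
          · exact hw j hj
      _ = ‖m‖ ^ 2 := by rw [← sum_mul, hc₁, one_mul]
  have hzero := (sum_eq_zero_iff_of_nonneg hterm).1 (le_antisymm hsum (sum_nonneg hterm)) i hi
  simpa [hci, sub_eq_zero] using hzero

theorem AffineMap.mem_convexHull_image_of_forall_norm_le {E : Type*} [AddCommGroup E]
    [Module ℝ E] (f : E →ᵃ[ℝ] F) {p : ι → E} {x : E}
    (hx : x ∈ convexHull ℝ (Set.range p)) (hmax : ∀ i, ‖f (p i)‖ ≤ ‖f x‖) :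
    x ∈ convexHull ℝ (p '' {i | f (p i) = f x}) := by
  classical
  rw [convexHull_range_eq_exists_affineCombination] at hx
  obtain ⟨t, c, hc₀, hc₁, hcx⟩ := hx
  have hfx : f x = ∑ i ∈ t, c i • f (p i) := by
    rw [← hcx, t.map_affineCombination p c hc₁, t.affineCombination_eq_linear_combination _ _ hc₁]
    rfl
  suffices {i ∈ t | c i ≠ 0}.centerMass c p ∈ convexHull ℝ (p '' {i | f (p i) = f x}) by
    rwa [centerMass_filter_ne_zero, ← affineCombination_eq_centerMass hc₁, hcx] at this
  refine centerMass_mem_convexHull _ (fun i hi => hc₀ i (mem_filter.1 hi).1)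
    (by rw [sum_filter_ne_zero, hc₁]; exact zero_lt_one) fun i hi => ⟨i, ?_, rfl⟩
  rw [mem_filter] at hi
  rw [Set.mem_ofPred_eq, hfx]
  exact eq_sum_smul_of_forall_norm_le hc₀ hc₁ (fun j _ => hfx ▸ hmax j) hi.1 hi.2

end

theorem AffineIndependent.eq_or_mem_of_vsub_mem_vectorSpan {k V P ι : Type*} [Ring k]
    [Nontrivial k] [AddCommGroup V] [Module k V] [AddTorsor V P] {p : ι → P}
    (hp : AffineIndependent k p) {s : Set ι} {i j : ι}
    (h : p i -ᵥ p j ∈ vectorSpan k (p '' s)) : i = j ∨ i ∈ s := by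
  have hi : p i ∈ affineSpan k (p '' insert j s) := by
    rw [← vsub_vadd (p i) (p j)]
    refine AffineSubspace.vadd_mem_of_mem_direction ?_
      (mem_affineSpan k (Set.mem_image_of_mem p (Set.mem_insert j s)))
    rw [direction_affineSpan]
    exact vectorSpan_mono k (Set.image_mono (Set.subset_insert j s)) h
  simpa using (hp.mem_affineSpan_iff i _).1 hi

theorem AffineIndependent.exists_notMem_eq_of_forall_norm_starProjection_le
    {E ι : Type*} [NormedAddCommGroup E] [InnerProductSpace ℝ E]
    {p : ι → E} (hp : AffineIndependent ℝ p) {s : Set ι}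
    [(vectorSpan ℝ (p '' s)).HasOrthogonalProjection]
    {q : E} (hq : q ∈ affineSpan ℝ (p '' s)) {i₁ : ι} (hi₁ : i₁ ∉ s)
    {x : E} (hx : x ∈ convexHull ℝ (Set.range p))
    (hmax : ∀ i, ‖(vectorSpan ℝ (p '' s))ᗮ.starProjection (p i - q)‖ ≤
      ‖(vectorSpan ℝ (p '' s))ᗮ.starProjection (x - q)‖) :
    ∃ i ∉ s, x = p i := by
  set V := vectorSpan ℝ (p '' s)
  set A := affineSpan ℝ (p '' s)
  have hker : ∀ z, Vᗮ.starProjection z = 0 ↔ z ∈ V := fun z => by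
    rw [Submodule.starProjection_apply_eq_zero_iff, Submodule.orthogonal_orthogonal]
  have hA : ∀ y, y ∈ A ↔ Vᗮ.starProjection (y - q) = 0 := fun y => by
    rw [hker, ← AffineSubspace.vsub_right_mem_direction_iff_mem hq, direction_affineSpan]
    rfl
  have hxA : x ∉ A := fun hxA => hi₁ <| (hp.mem_affineSpan_iff i₁ s).1 <| (hA _).2 <|
    norm_le_zero_iff.1 ((hmax i₁).trans (((hA x).1 hxA).symm ▸ norm_zero.le))
  let f : E →ᵃ[ℝ] E := Vᗮ.starProjection.toLinearMap.toAffineMap.comp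
    (AffineMap.id ℝ E - AffineMap.const ℝ E q)
  have hf : ∀ y, f y = Vᗮ.starProjection (y - q) := fun y => rfl
  have hxT := f.mem_convexHull_image_of_forall_norm_le hx (by simpa only [hf] using hmax)
  have hdir : ∀ i ∈ {i | f (p i) = f x}, p i - x ∈ V := fun i hi => by
    rw [← hker, ← sub_sub_sub_cancel_right _ _ q, map_sub, ← hf, ← hf, hi, sub_self]
  have hT : {i | f (p i) = f x}.Subsingleton := by
    intro j hj a ha
    refine (hp.eq_or_mem_of_vsub_mem_vectorSpan (s := s) ?_).resolve_right fun hjs => hxA ?_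
    · simpa using sub_mem (hdir j hj) (hdir a ha)
    · refine (AffineSubspace.vsub_left_mem_direction_iff_mem
        (mem_affineSpan ℝ (Set.mem_image_of_mem p hjs)) x).1 ?_
      rw [direction_affineSpan]
      exact hdir j hj
  rw [(hT.image p).convex.convexHull_eq] at hxT
  obtain ⟨a, -, rfl⟩ := hxT
  exact ⟨a, fun has => hxA (mem_affineSpan ℝ (Set.mem_image_of_mem p has)), rfl⟩

/-- Correctness of the recursive step of the successive projection
algorithm: with affinely independent points `v 0, …, v (J-1)` (representing
`v_1, …, v_J`), `2 ≤ r ≤ J`, and `Π` the orthogonal projection onto the orthogonal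
complement of `span {v_i - v_0 : 1 ≤ i ≤ r - 2}` (one-based: `{v_2 - v_1, …, v_{r-1} - v_1}`),
any point of `S` maximizing `‖Π (· - v 0)‖` is a vertex `v i` with one-based index `≥ r`. -/
theorem successive_projection_step
    {E : Type*} [NormedAddCommGroup E] [InnerProductSpace ℝ E] [FiniteDimensional ℝ E]
    (J : ℕ) (hJ : 0 < J) (v : Fin J → E) (hv : AffineIndependent ℝ v)
    (S : Finset E)
    (hVS : ∀ j, v j ∈ S)
    (hSV : ∀ y ∈ S, y ∈ convexHull ℝ (Set.range v))
    (r : ℕ) (hr2 : 2 ≤ r) (hrJ : r ≤ J)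
    (K : Submodule ℝ E)
    (hK : K = (Submodule.span ℝ
      {w : E | ∃ i : Fin J, 1 ≤ (i : ℕ) ∧ (i : ℕ) ≤ r - 2 ∧ w = v i - v ⟨0, hJ⟩})ᗮ)
    (x : E) (hxS : x ∈ S)
    (hmax : ∀ y ∈ S,
      ‖(K.orthogonalProjection (y - v ⟨0, hJ⟩) : E)‖ ≤
        ‖(K.orthogonalProjection (x - v ⟨0, hJ⟩) : E)‖) :
    ∃ i : Fin J, r ≤ (i : ℕ) + 1 ∧ x = v i := by
  set s : Set (Fin J) := {i | (i : ℕ) ≤ r - 2}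
  have h₀ : (⟨0, hJ⟩ : Fin J) ∈ s := Nat.zero_le _
  have hK' : K = (vectorSpan ℝ (v '' s))ᗮ := by
    rw [hK, vectorSpan_image_eq_span_vsub_set_right_ne ℝ v h₀]
    congr 2
    ext w
    simp only [Nat.one_le_iff_ne_zero, ne_eq, Set.mem_ofPred_eq, vsub_eq_sub, Set.mem_image,
      Set.mem_sdiff, Set.mem_singleton_iff, Fin.ext_iff, exists_exists_and_eq_and, s]
    exact exists_congr fun i => by tauto
  subst hK'
  obtain ⟨i, his, rfl⟩ := hv.exists_notMem_eq_of_forall_norm_starProjection_le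
    (mem_affineSpan ℝ (Set.mem_image_of_mem v h₀)) (i₁ := ⟨r - 1, by omega⟩)
    (fun h : r - 1 ≤ r - 2 => by omega) (hSV x hxS) fun i => hmax (v i) (hVS i)
  have his : ¬(i : ℕ) ≤ r - 2 := his
  exact ⟨i, by omega, rfl⟩
end
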